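/- Detailed balance identity (interior transitions, subcritical case): let γ, p, δ > 0 with q_{i,j} = p_i/γ_{i,j}, and define π(k) = C·(K-1)!·δ^(K-1)·∏_{i,j} q_{i,j}^{k_{i,j}}/k_{i,j}! where K = ∑ k_{i,j} ≥ 1. Then for any k with K ≥ 2: ∑_{i}∑_{j=1}^{n_i-1} π(k + e_{i,j} - e_{i,j+1})·(k_{i,j}+1)·γ_{i,j} + ∑_i π(k + e_{i,n_i})·(k_{i,n_i}+1)·γ_{i,n_i} + ∑_i π(k - e_{i,1})·(K-1)·p_i·δ = π(k)·(∑_{i,j} k_{i,j}γ_{i,j} + Kδ), where terms with k - e_{i,1} are included only when k_{i,1} ≥ 1. -/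

import Mathlib

open Finset

/-- Standard basis vector `e i j` in the state space of stage-occupancy vectors. -/
def bvec {m : ℕ} (i : Fin m) (j : ℕ) : Fin m → ℕ → ℕ :=
  fun a b => if a = i ∧ b = j then 1 else 0

/-- Stationary weight of state `k` for the subcritical regenerating process:
`π(k) = C (K-1)! δ^(K-1) ∏_{i,j} q_{i,j}^{k_{i,j}} / k_{i,j}!` with `K = ∑ k_{i,j}`. -/
noncomputable def statWt {m : ℕ} (n : Fin m → ℕ) (C δ : ℝ) (q : Fin m → ℕ → ℝ)
    (k : Fin m → ℕ → ℕ) : ℝ :=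
  C * (Nat.factorial ((∑ i, ∑ j ∈ range (n i), k i j) - 1)) *
    δ ^ ((∑ i, ∑ j ∈ range (n i), k i j) - 1) *
    ∏ i, ∏ j ∈ range (n i), q i j ^ (k i j) / (Nat.factorial (k i j))

section helpers
variable {m : ℕ} (n : Fin m → ℕ) (q : Fin m → ℕ → ℝ)

lemma indic_sum (i0 : Fin m) (j0 : ℕ) (h : j0 < n i0) :
    (∑ i, ∑ j ∈ range (n i), bvec i0 j0 i j) = 1 := by
  have step : ∀ i : Fin m, (∑ j ∈ range (n i), bvec i0 j0 i j)
      = if i = i0 then 1 else 0 := by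
    intro i
    by_cases hi : i = i0
    · subst hi
      simp only [bvec, true_and]
      rw [Finset.sum_ite_eq' (range (n i)) j0 (fun _ => 1), if_pos (Finset.mem_range.mpr h)]
      simp
    · simp [bvec, hi]
  rw [Finset.sum_congr rfl (fun i _ => step i), Finset.sum_ite_eq' univ i0 (fun _ => 1)]
  simp

lemma indic_prod (c : ℝ) (i0 : Fin m) (j0 : ℕ) (h : j0 < n i0) :
    (∏ i, ∏ j ∈ range (n i), (if i = i0 ∧ j = j0 then c else 1)) = c := by
  have step : ∀ i : Fin m, (∏ j ∈ range (n i), (if i = i0 ∧ j = j0 then c else 1))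
      = if i = i0 then c else 1 := by
    intro i
    by_cases hi : i = i0
    · subst hi
      simp only [true_and]
      rw [Finset.prod_ite_eq' (range (n i)) j0 (fun _ => c), if_pos (Finset.mem_range.mpr h)]
      simp
    · simp [hi]
  rw [Finset.prod_congr rfl (fun i _ => step i), Finset.prod_ite_eq' univ i0 (fun _ => c)]
  simp

lemma sum_add_bvec (k : Fin m → ℕ → ℕ) (i0 : Fin m) (j0 : ℕ) (h : j0 < n i0) :
    (∑ i, ∑ j ∈ range (n i), (k + bvec i0 j0) i j)
      = (∑ i, ∑ j ∈ range (n i), k i j) + 1 := by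
  simp only [Pi.add_apply, Finset.sum_add_distrib]
  rw [indic_sum n i0 j0 h]

lemma sub_add_bvec (k : Fin m → ℕ → ℕ) (i0 : Fin m) (j0 : ℕ) (h1 : 1 ≤ k i0 j0) :
    (k - bvec i0 j0) + bvec i0 j0 = k := by
  funext a b
  simp only [Pi.add_apply, Pi.sub_apply, bvec]
  split_ifs with hcond
  · obtain ⟨rfl, rfl⟩ := hcond; omega
  · omega

lemma sum_sub_bvec (k : Fin m → ℕ → ℕ) (i0 : Fin m) (j0 : ℕ) (h : j0 < n i0)
    (h1 : 1 ≤ k i0 j0) :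
    (∑ i, ∑ j ∈ range (n i), (k - bvec i0 j0) i j)
      = (∑ i, ∑ j ∈ range (n i), k i j) - 1 := by
  have := sum_add_bvec n ((k - bvec i0 j0)) i0 j0 h
  rw [sub_add_bvec k i0 j0 h1] at this
  omega

lemma prod_add_bvec (k : Fin m → ℕ → ℕ) (i0 : Fin m) (j0 : ℕ) (h : j0 < n i0) :
    (∏ i, ∏ j ∈ range (n i), q i j ^ ((k + bvec i0 j0) i j) / (Nat.factorial ((k + bvec i0 j0) i j)))
      = (∏ i, ∏ j ∈ range (n i), q i j ^ (k i j) / (Nat.factorial (k i j)))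
        * (q i0 j0 / (k i0 j0 + 1)) := by
  have key : ∀ i : Fin m, ∀ j ∈ range (n i),
      q i j ^ ((k + bvec i0 j0) i j) / (Nat.factorial ((k + bvec i0 j0) i j))
        = (q i j ^ (k i j) / (Nat.factorial (k i j)))
          * (if i = i0 ∧ j = j0 then q i0 j0 / (k i0 j0 + 1) else 1) := by
    intro i j _
    by_cases hcond : i = i0 ∧ j = j0
    · obtain ⟨rfl, rfl⟩ := hcond
      have hb : (k + bvec i j) i j = k i j + 1 := by simp [bvec]
      rw [hb, if_pos ⟨rfl, rfl⟩]
      have hfac : ((Nat.factorial (k i j + 1) : ℕ) : ℝ)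
          = ((k i j : ℝ) + 1) * (Nat.factorial (k i j)) := by
        push_cast [Nat.factorial_succ]; ring
      have h1 : ((Nat.factorial (k i j) : ℕ) : ℝ) ≠ 0 := by
        exact_mod_cast (Nat.factorial_pos _).ne'
      have h2 : ((k i j : ℝ) + 1) ≠ 0 := by positivity
      rw [hfac, pow_succ, div_mul_div_comm]
      rw [mul_comm ((k i j : ℝ) + 1) ((Nat.factorial (k i j) : ℕ) : ℝ)]
    · have hb : (k + bvec i0 j0) i j = k i j := by simp [bvec, hcond]
      rw [hb, if_neg hcond, mul_one]
  rw [Finset.prod_congr rfl (fun i _ => Finset.prod_congr rfl (key i))]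
  simp only [Finset.prod_mul_distrib]
  rw [indic_prod n _ i0 j0 h]

lemma prod_sub_bvec (k : Fin m → ℕ → ℕ) (i0 : Fin m) (j0 : ℕ) (h : j0 < n i0)
    (h1 : 1 ≤ k i0 j0) (hq0 : q i0 j0 ≠ 0) :
    (∏ i, ∏ j ∈ range (n i), q i j ^ ((k - bvec i0 j0) i j) / (Nat.factorial ((k - bvec i0 j0) i j)))
      = (∏ i, ∏ j ∈ range (n i), q i j ^ (k i j) / (Nat.factorial (k i j)))
        * ((k i0 j0 : ℝ) / q i0 j0) := by
  have hP := prod_add_bvec n q (k - bvec i0 j0) i0 j0 h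
  rw [sub_add_bvec k i0 j0 h1] at hP
  have hv : (k - bvec i0 j0) i0 j0 = k i0 j0 - 1 := by simp [bvec]
  rw [hv] at hP
  have hc : ((k i0 j0 - 1 : ℕ) : ℝ) + 1 = (k i0 j0 : ℝ) := by
    push_cast [Nat.cast_sub h1]; ring
  rw [hc] at hP
  have hk0 : (k i0 j0 : ℝ) ≠ 0 := by
    have : (0:ℝ) < (k i0 j0 : ℝ) := by exact_mod_cast h1
    exact this.ne'
  rw [hP]
  field_simp

end helpers

-- appended content (test with full file)
section statlem
variable {m : ℕ} (n : Fin m → ℕ) (C δ : ℝ) (q : Fin m → ℕ → ℝ)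

lemma statWt_add (k : Fin m → ℕ → ℕ) (i0 : Fin m) (j0 : ℕ) (h : j0 < n i0) :
    statWt n C δ q (k + bvec i0 j0)
      = C * (Nat.factorial (∑ i, ∑ j ∈ range (n i), k i j))
        * δ ^ (∑ i, ∑ j ∈ range (n i), k i j)
        * ((∏ i, ∏ j ∈ range (n i), q i j ^ (k i j) / (Nat.factorial (k i j)))
            * (q i0 j0 / (k i0 j0 + 1))) := by
  unfold statWt
  rw [sum_add_bvec n k i0 j0 h, prod_add_bvec n q k i0 j0 h, Nat.add_sub_cancel]

lemma statWt_sub (k : Fin m → ℕ → ℕ) (i0 : Fin m) (j0 : ℕ) (h : j0 < n i0)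
    (h1 : 1 ≤ k i0 j0) (hq0 : q i0 j0 ≠ 0) :
    statWt n C δ q (k - bvec i0 j0)
      = C * (Nat.factorial ((∑ i, ∑ j ∈ range (n i), k i j) - 2))
        * δ ^ ((∑ i, ∑ j ∈ range (n i), k i j) - 2)
        * ((∏ i, ∏ j ∈ range (n i), q i j ^ (k i j) / (Nat.factorial (k i j)))
            * ((k i0 j0 : ℝ) / q i0 j0)) := by
  unfold statWt
  rw [sum_sub_bvec n k i0 j0 h h1, prod_sub_bvec n q k i0 j0 h h1 hq0, Nat.sub_sub]

lemma statWt_interior (k : Fin m → ℕ → ℕ) (i0 : Fin m) (j0 : ℕ) (h : j0 + 1 < n i0)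
    (h1 : 1 ≤ k i0 (j0 + 1)) (hq0 : q i0 (j0 + 1) ≠ 0) :
    statWt n C δ q (k + bvec i0 j0 - bvec i0 (j0 + 1))
      = C * (Nat.factorial ((∑ i, ∑ j ∈ range (n i), k i j) - 1))
        * δ ^ ((∑ i, ∑ j ∈ range (n i), k i j) - 1)
        * ((∏ i, ∏ j ∈ range (n i), q i j ^ (k i j) / (Nat.factorial (k i j)))
            * (q i0 j0 / (k i0 j0 + 1)) * ((k i0 (j0 + 1) : ℝ) / q i0 (j0 + 1))) := by
  have h0 : j0 < n i0 := by omega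
  set k1 := k + bvec i0 j0 with hk1
  have hval : k1 i0 (j0 + 1) = k i0 (j0 + 1) := by
    simp [hk1, bvec]
  unfold statWt
  rw [sum_sub_bvec n k1 i0 (j0 + 1) h (by rw [hval]; exact h1),
    prod_sub_bvec n q k1 i0 (j0 + 1) h (by rw [hval]; exact h1) hq0,
    sum_add_bvec n k i0 j0 h0, prod_add_bvec n q k i0 j0 h0, hval,
    Nat.add_sub_cancel]

end statlem

theorem detailed_balance_subcritical {m : ℕ} (n : Fin m → ℕ) (hn : ∀ i, 1 ≤ n i)
    (γ p : Fin m → ℕ → ℝ) (δ C : ℝ) (hδ : 0 < δ) (hC : 0 < C)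
    (hγ : ∀ i j, 0 < γ i j) (pr : Fin m → ℝ) (hp : ∀ i, 0 < pr i)
    (hpsum : ∑ i, pr i = 1)
    (q : Fin m → ℕ → ℝ) (hq : ∀ i j, q i j = pr i / γ i j)
    (k : Fin m → ℕ → ℕ) (K : ℕ) (hK : K = ∑ i, ∑ j ∈ range (n i), k i j)
    (hK2 : 2 ≤ K) :
    (∑ i, ∑ j ∈ range (n i - 1),
        (if 1 ≤ k i (j + 1) then
          statWt n C δ q (k + bvec i j - bvec i (j + 1)) * (k i j + 1) * γ i j
         else 0)) +
    (∑ i, statWt n C δ q (k + bvec i (n i - 1)) * (k i (n i - 1) + 1) * γ i (n i - 1)) +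
    (∑ i, if 1 ≤ k i 0 then
        statWt n C δ q (k - bvec i 0) * ((K : ℝ) - 1) * pr i * δ else 0) =
    statWt n C δ q k *
      ((∑ i, ∑ j ∈ range (n i), (k i j : ℝ) * γ i j) + K * δ) := by
  have hq0 : ∀ i j, q i j ≠ 0 := by
    intro i j; rw [hq]
    have := hp i; have := hγ i j
    positivity
  have hstat : statWt n C δ q k
      = C * (Nat.factorial (K - 1)) * δ ^ (K - 1)
        * (∏ i, ∏ j ∈ range (n i), q i j ^ (k i j) / (Nat.factorial (k i j))) := by
    unfold statWt; rw [← hK]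
  have h1 : K - 1 + 1 = K := by omega
  have h2 : K - 2 + 1 = K - 1 := by omega
  have hfacK : (Nat.factorial K : ℝ) = (K : ℝ) * Nat.factorial (K - 1) := by
    calc (Nat.factorial K : ℝ) = (Nat.factorial (K - 1 + 1) : ℝ) := by rw [h1]
    _ = ((K - 1 + 1 : ℕ) : ℝ) * Nat.factorial (K - 1) := by
        rw [Nat.factorial_succ]; push_cast; ring
    _ = (K : ℝ) * Nat.factorial (K - 1) := by rw [h1]
  have hfacK1 : (Nat.factorial (K - 1) : ℝ) = ((K : ℝ) - 1) * Nat.factorial (K - 2) := by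
    calc (Nat.factorial (K - 1) : ℝ) = (Nat.factorial (K - 2 + 1) : ℝ) := by rw [h2]
    _ = ((K - 2 + 1 : ℕ) : ℝ) * Nat.factorial (K - 2) := by
        rw [Nat.factorial_succ]; push_cast; ring
    _ = ((K : ℝ) - 1) * Nat.factorial (K - 2) := by
        rw [h2, Nat.cast_sub (by omega : 1 ≤ K)]; norm_num
  have hpowK : δ ^ K = δ ^ (K - 1) * δ := by
    calc δ ^ K = δ ^ (K - 1 + 1) := by rw [h1]
    _ = δ ^ (K - 1) * δ := pow_succ _ _
  have hpowK1 : δ ^ (K - 1) = δ ^ (K - 2) * δ := by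
    calc δ ^ (K - 1) = δ ^ (K - 2 + 1) := by rw [h2]
    _ = δ ^ (K - 2) * δ := pow_succ _ _
  have T1 : ∀ i : Fin m, ∀ j ∈ range (n i - 1),
      (if 1 ≤ k i (j + 1) then
          statWt n C δ q (k + bvec i j - bvec i (j + 1)) * (k i j + 1) * γ i j
        else 0)
        = statWt n C δ q k * ((k i (j + 1) : ℝ) * γ i (j + 1)) := by
    intro i j hj
    have hjlt : j + 1 < n i := by have := Finset.mem_range.mp hj; omega
    by_cases hb : 1 ≤ k i (j + 1)
    · rw [if_pos hb, statWt_interior n C δ q k i j hjlt hb (hq0 i (j + 1)), hstat, ← hK,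
        hq i j, hq i (j + 1)]
      have hγ1 := (hγ i j).ne'
      have hγ2 := (hγ i (j + 1)).ne'
      have hpri := (hp i).ne'
      have hkn : ((k i j : ℝ) + 1) ≠ 0 := by positivity
      field_simp
    · rw [if_neg hb]
      have : k i (j + 1) = 0 := by omega
      simp [this]
  have T2 : ∀ i : Fin m,
      statWt n C δ q (k + bvec i (n i - 1)) * (k i (n i - 1) + 1) * γ i (n i - 1)
        = statWt n C δ q k * ((K : ℝ) * δ * pr i) := by
    intro i
    have hlt : n i - 1 < n i := by have := hn i; omega
    rw [statWt_add n C δ q k i (n i - 1) hlt, hstat, ← hK, hfacK, hpowK, hq i (n i - 1)]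
    have hγ1 := (hγ i (n i - 1)).ne'
    have hpri := (hp i).ne'
    have hkn : ((k i (n i - 1) : ℝ) + 1) ≠ 0 := by positivity
    field_simp
  have T3 : ∀ i : Fin m,
      (if 1 ≤ k i 0 then statWt n C δ q (k - bvec i 0) * ((K : ℝ) - 1) * pr i * δ else 0)
        = statWt n C δ q k * ((k i 0 : ℝ) * γ i 0) := by
    intro i
    by_cases hb : 1 ≤ k i 0
    · rw [if_pos hb, statWt_sub n C δ q k i 0 (by have := hn i; omega) hb (hq0 i 0),
        hstat, ← hK, hfacK1, hpowK1, hq i 0]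
      have hγ1 := (hγ i 0).ne'
      have hpri := (hp i).ne'
      field_simp
    · rw [if_neg hb]
      have : k i 0 = 0 := by omega
      simp [this]
  rw [Finset.sum_congr rfl (fun i _ => Finset.sum_congr rfl (T1 i)),
    Finset.sum_congr rfl (fun i _ => T2 i),
    Finset.sum_congr rfl (fun i _ => T3 i)]
  simp only [← Finset.mul_sum]
  have key : (∑ i, ∑ j ∈ range (n i - 1), (k i (j + 1) : ℝ) * γ i (j + 1))
      + (∑ i, (k i 0 : ℝ) * γ i 0)
      = ∑ i, ∑ j ∈ range (n i), (k i j : ℝ) * γ i j := by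
    rw [← Finset.sum_add_distrib]
    refine Finset.sum_congr rfl fun i _ => ?_
    have hni : n i = (n i - 1) + 1 := by have := hn i; omega
    conv_rhs => rw [hni]
    rw [Finset.sum_range_succ']
  rw [hpsum, ← key]
  ring
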